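/- Let Y be an n-dimensional abelian variety and B ⊂ Y a smooth ample divisor. Then (-1)^{n-1} χ_top(B) ≥ C(2n, n) - C(2n, n-1) > 0; in particular χ_top(B) ≠ 0. -/
import Mathlib

open Finset

/-- Alternating partial sum of binomial coefficients. -/
lemma alt_sum_choose (N k : ℕ) :
    ∑ i ∈ range (k + 1), (-1 : ℤ) ^ i * ((N + 1).choose i) = (-1) ^ k * (N.choose k) := by
  induction k with
  | zero => simp
  | succ k ih =>
    rw [Finset.sum_range_succ, ih, Nat.choose_succ_succ' N k]
    push_cast
    ring

/-- Let `B` be a smooth ample divisor in an `n`-dimensional abelian variety `Y`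
(`n ≥ 1`). The Betti numbers `b i` of `B` satisfy, by the Lefschetz hyperplane
theorem, `b i = C(2n, i)` for `i ≤ n - 2` and `b (n-1) ≥ C(2n, n-1)`, and
Poincaré duality gives `b (2n - 2 - i) = b i` for `i ≤ 2n - 2`; the topological
Euler characteristic is `χ_top(B) = Σ_{i=0}^{2n-2} (-1)^i b i`. Then
`(-1)^{n-1} χ_top(B) ≥ C(2n, n) - C(2n, n-1) > 0`; in particular `χ_top(B) ≠ 0`. -/
theorem euler_char_ample_divisor_abelian_variety
    (n : ℕ) (hn : 1 ≤ n) (b : ℕ → ℕ) (χB : ℤ)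
    (hχ : χB = ∑ i ∈ range (2 * n - 1), (-1 : ℤ) ^ i * b i)
    (hLefschetz_iso : ∀ i ≤ n - 2, b i = Nat.choose (2 * n) i)
    (hLefschetz_inj : Nat.choose (2 * n) (n - 1) ≤ b (n - 1))
    (hPoincare : ∀ i ≤ 2 * n - 2, b (2 * n - 2 - i) = b i) :
    ((Nat.choose (2 * n) n : ℤ) - Nat.choose (2 * n) (n - 1) ≤ (-1) ^ (n - 1) * χB) ∧
      (0 : ℤ) < (Nat.choose (2 * n) n : ℤ) - Nat.choose (2 * n) (n - 1) ∧
      χB ≠ 0 := by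
  match n, hn with
  | 1, _ =>
    have hb0 : b 0 = 1 := by simpa using hLefschetz_iso 0 (by norm_num)
    rw [show 2 * 1 - 1 = 1 from rfl] at hχ
    rw [Finset.sum_range_one, hb0] at hχ
    norm_num [hχ]
  | (m + 2), _ =>
    -- normalize the index arithmetic
    have e1 : 2 * (m + 2) - 1 = (m + 2) + (m + 1) := by omega
    have e2 : m + 2 - 2 = m := by omega
    have e3 : m + 2 - 1 = m + 1 := by omega
    have e4 : 2 * (m + 2) - 2 = 2 * m + 2 := by omega
    have e5 : 2 * (m + 2) = 2 * m + 4 := by omega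
    rw [e1] at hχ
    rw [e2, e5] at hLefschetz_iso
    rw [e3, e5] at hLefschetz_inj
    rw [e4] at hPoincare
    rw [e3, e5]
    -- split the sum
    rw [Finset.sum_range_add, Finset.sum_range_succ] at hχ
    -- the tail equals the head, by Poincaré duality
    have htail : ∑ i ∈ range (m + 1), (-1 : ℤ) ^ (m + 2 + i) * b (m + 2 + i)
        = ∑ i ∈ range (m + 1), (-1 : ℤ) ^ i * b i := by
      rw [← Finset.sum_range_reflect (fun i => (-1 : ℤ) ^ i * b i) (m + 1)]
      refine Finset.sum_congr rfl fun i hi => ?_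
      have him : i ≤ m := by simpa [Nat.lt_succ_iff] using hi
      have hbi : b (m + 2 + i) = b (m - i) := by
        have := hPoincare (m - i) (by omega)
        rwa [show 2 * m + 2 - (m - i) = m + 2 + i by omega] at this
      have hsign : ((-1 : ℤ)) ^ (m + 2 + i) = (-1) ^ (m + 1 - 1 - i) := by
        have : m + 1 - 1 - i = m - i := by omega
        rw [this]
        have h2 : (m + 2 + i) = (m - i) + 2 * i + 2 := by omega
        rw [h2, pow_add, pow_add, pow_mul]
        norm_num
      rw [hbi, hsign, show m + 1 - 1 - i = m - i by omega]
    rw [htail] at hχ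
    -- evaluate the head sum using Lefschetz
    have hhead : ∑ i ∈ range (m + 1), (-1 : ℤ) ^ i * b i
        = (-1) ^ m * ((2 * m + 3).choose m) := by
      rw [← alt_sum_choose (2 * m + 3) m]
      refine Finset.sum_congr rfl fun i hi => ?_
      have him : i ≤ m := by simpa [Nat.lt_succ_iff] using hi
      rw [hLefschetz_iso i him, show 2 * m + 3 + 1 = 2 * m + 4 by omega]
    rw [hhead] at hχ
    -- binomial identities
    have hA : (2 * m + 4).choose (m + 1) = (2 * m + 3).choose m + (2 * m + 3).choose (m + 1) :=
      Nat.choose_succ_succ' (2 * m + 3) m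
    have hBsymm : (2 * m + 3).choose (m + 2) = (2 * m + 3).choose (m + 1) := by
      have h := Nat.choose_symm (n := 2 * m + 3) (k := m + 2) (by omega)
      rw [show 2 * m + 3 - (m + 2) = m + 1 by omega] at h
      exact h.symm
    have hB : (2 * m + 4).choose (m + 2) = 2 * ((2 * m + 3).choose (m + 1)) := by
      have h := Nat.choose_succ_succ' (2 * m + 3) (m + 1)
      simp only [show 2 * m + 3 + 1 = 2 * m + 4 by omega, show m + 1 + 1 = m + 2 by omega] at h
      omega
    have hstrict : (2 * m + 3).choose m < (2 * m + 3).choose (m + 1) := by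
      have h1 := Nat.choose_succ_right_eq (2 * m + 3) m
      have h2 : 0 < (2 * m + 3).choose m := Nat.choose_pos (by omega)
      have h3 : 2 * m + 3 - m = m + 3 := by omega
      rw [h3] at h1
      nlinarith [h1, h2]
    -- sign bookkeeping: (-1)^(m+1) * χB = b (m+1) - 2 * C(2m+3, m)
    have hkey : (-1 : ℤ) ^ (m + 1) * χB = (b (m + 1) : ℤ) - 2 * ((2 * m + 3).choose m) := by
      have hm1 : ((-1 : ℤ)) ^ (m + 1) = -((-1) ^ m) := by rw [pow_succ]; ring
      have hx : ((-1 : ℤ)) ^ m * (-1) ^ m = 1 := by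
        rw [← pow_add, ← two_mul, pow_mul]; norm_num
      rw [hχ, hm1]
      linear_combination ((b (m + 1) : ℤ) - 2 * ((2 * m + 3).choose m)) * hx
    have hbineq : ((2 * m + 4).choose (m + 1) : ℤ) ≤ (b (m + 1) : ℤ) := by
      exact_mod_cast hLefschetz_inj
    refine ⟨?_, ?_, ?_⟩
    · rw [hkey]
      have hAz : ((2 * m + 4).choose (m + 1) : ℤ)
          = ((2 * m + 3).choose m : ℤ) + ((2 * m + 3).choose (m + 1) : ℤ) := by
        exact_mod_cast hA
      have hBz : ((2 * m + 4).choose (m + 2) : ℤ) = 2 * ((2 * m + 3).choose (m + 1) : ℤ) := by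
        exact_mod_cast hB
      linarith
    · have hAz : ((2 * m + 4).choose (m + 1) : ℤ)
          = ((2 * m + 3).choose m : ℤ) + ((2 * m + 3).choose (m + 1) : ℤ) := by
        exact_mod_cast hA
      have hBz : ((2 * m + 4).choose (m + 2) : ℤ) = 2 * ((2 * m + 3).choose (m + 1) : ℤ) := by
        exact_mod_cast hB
      have : ((2 * m + 3).choose m : ℤ) < ((2 * m + 3).choose (m + 1) : ℤ) := by
        exact_mod_cast hstrict
      linarith
    · intro h0
      rw [h0, mul_zero] at hkey
      have hAz : ((2 * m + 4).choose (m + 1) : ℤ)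
          = ((2 * m + 3).choose m : ℤ) + ((2 * m + 3).choose (m + 1) : ℤ) := by
        exact_mod_cast hA
      have : ((2 * m + 3).choose m : ℤ) < ((2 * m + 3).choose (m + 1) : ℤ) := by
        exact_mod_cast hstrict
      linarith
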